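/- For every functor F in A = Fun(C, G), the functor F^+ in B = Fun(Cᵒᵖ, G) is pure injective. -/

import Mathlib

set_option linter.unusedSectionVars false

open CategoryTheory CategoryTheory.Limits CategoryTheory.MonoidalCategory
  CategoryTheory.MonoidalClosed

universe v u

namespace FlatFunctorsPaper

variable {G : Type u} [Category.{v} G] [Abelian G] [MonoidalCategory G]
  [SymmetricCategory G] [MonoidalClosed G] [MonoidalPreadditive G]

/-- `X⁺ = [X, J]`, the internal hom into `J`. -/
noncomputable def pObj (J X : G) : G := (ihom X).obj J

/-- The contravariant functorial action of `(-)⁺ = [-, J]`. -/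
noncomputable def pMap (J : G) {X Y : G} (f : X ⟶ Y) : pObj J Y ⟶ pObj J X :=
  (MonoidalClosed.pre f).app J

@[simp] lemma pMap_id (J X : G) : pMap J (𝟙 X) = 𝟙 (pObj J X) := by
  simp [pMap, pObj]

@[simp] lemma pMap_comp (J : G) {X Y Z : G} (f : X ⟶ Y) (g : Y ⟶ Z) :
    pMap J (f ≫ g) = pMap J g ≫ pMap J f := by
  simp [pMap, pObj]

@[simp] lemma pMap_zero (J : G) (X Y : G) : pMap J (0 : X ⟶ Y) = 0 := by
  show (MonoidalClosed.pre (0 : X ⟶ Y)).app J = (0 : (ihom Y).obj J ⟶ (ihom X).obj J)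
  apply MonoidalClosed.uncurry_injective
  rw [MonoidalClosed.uncurry_pre, MonoidalClosed.uncurry_eq]
  simp

/-- The canonical biduality morphism `X ⟶ X⁺⁺` in `G`. -/
noncomputable def bid (J X : G) : X ⟶ pObj J (pObj J X) :=
  MonoidalClosed.curry ((β_ (pObj J X) X).hom ≫ (ihom.ev X).app J)

lemma bid_natural (J : G) {X Y : G} (f : X ⟶ Y) :
    f ≫ bid J Y = bid J X ≫ pMap J (pMap J f) := by
  show f ≫ MonoidalClosed.curry ((β_ ((ihom Y).obj J) Y).hom ≫ (ihom.ev Y).app J) =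
    MonoidalClosed.curry ((β_ ((ihom X).obj J) X).hom ≫ (ihom.ev X).app J) ≫
      (MonoidalClosed.pre ((MonoidalClosed.pre f).app J)).app J
  apply MonoidalClosed.uncurry_injective
  rw [MonoidalClosed.uncurry_natural_left, MonoidalClosed.uncurry_natural_left]
  erw [MonoidalClosed.uncurry_curry, MonoidalClosed.uncurry_pre]
  rw [whisker_exchange_assoc]
  rw [← MonoidalClosed.uncurry_eq, MonoidalClosed.uncurry_curry]
  simp

section Dual

variable {D : Type v} [SmallCategory D]

/-- The objectwise dual `F⁺` of a functor `F : D ⥤ G`, a functor `Dᵒᵖ ⥤ G`. -/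
@[simps] noncomputable def dObj (J : G) (F : D ⥤ G) : Dᵒᵖ ⥤ G where
  obj c := pObj J (F.obj c.unop)
  map f := pMap J (F.map f.unop)
  map_id c := by simp
  map_comp f g := by simp

/-- The dual of a natural transformation. -/
@[simps] noncomputable def dMap (J : G) {F F' : D ⥤ G} (η : F ⟶ F') :
    dObj J F' ⟶ dObj J F where
  app c := pMap J (η.app c.unop)
  naturality _ _ f := by
    show pMap J _ ≫ pMap J _ = pMap J _ ≫ pMap J _
    rw [← pMap_comp, ← pMap_comp, NatTrans.naturality]

@[simp] lemma dMap_id (J : G) (F : D ⥤ G) : dMap J (𝟙 F) = 𝟙 (dObj J F) := by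
  ext c; simp; rfl

@[simp] lemma dMap_comp (J : G) {F F' F'' : D ⥤ G} (α : F ⟶ F') (β : F' ⟶ F'') :
    dMap J (α ≫ β) = dMap J β ≫ dMap J α := by
  ext c; simp; rfl

@[simp] lemma dMap_zero (J : G) (F F' : D ⥤ G) : dMap J (0 : F ⟶ F') = 0 := by
  ext c; simp; rfl

/-- The double dual `F⁺⁺` of a functor `F : D ⥤ G`. -/
noncomputable def ddObj (J : G) (F : D ⥤ G) : D ⥤ G := opOp D ⋙ dObj J (dObj J F)

/-- The canonical natural transformation `φ_F : F ⟶ F⁺⁺`. -/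
noncomputable def phi (J : G) (F : D ⥤ G) : F ⟶ ddObj J F where
  app c := bid J (F.obj c)
  naturality _ _ f := bid_natural J (F.map f)

/-- The dual of a short exact sequence (short complex) of functors. -/
noncomputable def dSC (J : G) (S : ShortComplex (D ⥤ G)) : ShortComplex (Dᵒᵖ ⥤ G) :=
  ShortComplex.mk (dMap J S.g) (dMap J S.f) (by rw [← dMap_comp, S.zero, dMap_zero])

/-- A short exact sequence of functors is *pure* if its dual splits. -/
def IsPure (J : G) (S : ShortComplex (D ⥤ G)) : Prop := Nonempty ((dSC J S).Splitting)

/-- A functor `F` is *flat* if every short exact sequence ending in `F` is pure. -/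
def IsFlat (J : G) (F : D ⥤ G) : Prop :=
  ∀ ⦃K E : D ⥤ G⦄ (i : K ⟶ E) (p : E ⟶ F) (w : i ≫ p = 0),
    (ShortComplex.mk i p w).ShortExact → IsPure J (ShortComplex.mk i p w)

/-- A functor `X` is *cotorsion* if every short exact sequence `0 → X → E → F → 0`
with `F` flat splits. -/
def IsCotorsion (J : G) (X : D ⥤ G) : Prop :=
  ∀ ⦃E F : D ⥤ G⦄ (i : X ⟶ E) (p : E ⟶ F) (w : i ≫ p = 0),
    (ShortComplex.mk i p w).ShortExact → IsFlat J F →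
      Nonempty (ShortComplex.mk i p w).Splitting

/-- A functor `P` is *pure injective* if every morphism into `P` extends along
pure monomorphisms. -/
def IsPureInjective (J : G) (P : D ⥤ G) : Prop :=
  ∀ ⦃K E L : D ⥤ G⦄ (i : K ⟶ E) (p : E ⟶ L) (w : i ≫ p = 0),
    (ShortComplex.mk i p w).ShortExact → IsPure J (ShortComplex.mk i p w) →
      ∀ f : K ⟶ P, ∃ h : E ⟶ P, i ≫ h = f

end Dual

section ObjectLevel

/-- The dual of a short exact sequence (short complex) in `G`. -/
noncomputable def dSCG (J : G) (S : ShortComplex G) : ShortComplex G :=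
  ShortComplex.mk (pMap J S.g) (pMap J S.f) (by rw [← pMap_comp, S.zero, pMap_zero])

/-- A short exact sequence in `G` is *pure* if its dual splits. -/
def IsPureG (J : G) (S : ShortComplex G) : Prop := Nonempty ((dSCG J S).Splitting)

/-- An object `X` of `G` is *flat* if every short exact sequence ending in `X` is pure. -/
def IsFlatG (J X : G) : Prop :=
  ∀ ⦃K E : G⦄ (i : K ⟶ E) (p : E ⟶ X) (w : i ≫ p = 0),
    (ShortComplex.mk i p w).ShortExact → IsPureG J (ShortComplex.mk i p w)

/-- An object `X` of `G` is *cotorsion* if every short exact sequence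
`0 → X → E → F → 0` with `F` flat splits. -/
def IsCotorsionG (J X : G) : Prop :=
  ∀ ⦃E F : G⦄ (i : X ⟶ E) (p : E ⟶ F) (w : i ≫ p = 0),
    (ShortComplex.mk i p w).ShortExact → IsFlatG J F →
      Nonempty (ShortComplex.mk i p w).Splitting

/-- The flat objects and the cotorsion objects form a complete cotorsion theory in `G`:
every object has a special flat precover and a special cotorsion preenvelope. -/
def CompleteFlatCotorsionTheoryG (J : G) : Prop :=
  ∀ X : G,
    (∃ (Cx F : G) (i : Cx ⟶ F) (p : F ⟶ X) (w : i ≫ p = 0),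
      (ShortComplex.mk i p w).ShortExact ∧ IsFlatG J F ∧ IsCotorsionG J Cx) ∧
    (∃ (Cx F : G) (i : X ⟶ Cx) (p : Cx ⟶ F) (w : i ≫ p = 0),
      (ShortComplex.mk i p w).ShortExact ∧ IsCotorsionG J Cx ∧ IsFlatG J F)

end ObjectLevel

section Complexes

variable {D : Type v} [SmallCategory D]

/-- A *flat complex*: an acyclic complex of flat functors all of whose kernels of
differentials are flat (equivalently, a pure acyclic complex of flat functors). -/
def IsFlatComplex (J : G) (X : CochainComplex (D ⥤ G) ℤ) : Prop :=
  (∀ n, X.ExactAt n) ∧ (∀ n, IsFlat J (X.X n)) ∧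
    ∀ n : ℤ, IsFlat J (kernel (X.d n (n + 1)))

/-- A *cotorsion complex*: an acyclic complex of cotorsion functors all of whose
kernels of differentials are cotorsion. -/
def IsCotorsionComplex (J : G) (X : CochainComplex (D ⥤ G) ℤ) : Prop :=
  (∀ n, X.ExactAt n) ∧ (∀ n, IsCotorsion J (X.X n)) ∧
    ∀ n : ℤ, IsCotorsion J (kernel (X.d n (n + 1)))

/-- A complex is *dg-cotorsion* if every short exact sequence of complexes
`0 → X → E → F → 0` with `F` a flat complex splits. -/
def IsDgCotorsion (J : G) (X : CochainComplex (D ⥤ G) ℤ) : Prop :=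
  ∀ ⦃E F : CochainComplex (D ⥤ G) ℤ⦄ (i : X ⟶ E) (p : E ⟶ F) (w : i ≫ p = 0),
    (ShortComplex.mk i p w).ShortExact → IsFlatComplex J F →
      Nonempty (ShortComplex.mk i p w).Splitting

end Complexes

/-!
A morphism `X ⟶ Y⁺` is a morphism `X ⊗ Y ⟶ J`, so the symmetry of `⊗` transposes it to a
morphism `Y ⟶ X⁺`, naturally in `X` and `Y`. Objectwise, this identifies natural transformations
`K ⟶ F⁺` with natural transformations `F ⟶ K⁺`. If `i : K ⟶ E` is pure, `i⁺` has a section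
`s : K⁺ ⟶ E⁺`, and `f : K ⟶ F⁺` extends along `i` to the transpose of `F ⟶ K⁺ ⟶ E⁺`
(the transpose of `f` followed by `s`).
-/

section Transpose

omit [Abelian G] [MonoidalPreadditive G]

noncomputable def transpose (J : G) {X Y : G} (u : X ⟶ pObj J Y) : Y ⟶ pObj J X :=
  curry ((β_ X Y).hom ≫ uncurry u)

lemma uncurry_transpose (J : G) {X Y : G} (u : X ⟶ pObj J Y) :
    uncurry (transpose J u) = (β_ X Y).hom ≫ uncurry u :=
  uncurry_curry _

lemma transpose_transpose (J : G) {X Y : G} (u : X ⟶ pObj J Y) :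
    transpose J (transpose J u) = u := by
  apply uncurry_injective
  rw [uncurry_transpose, uncurry_transpose, SymmetricCategory.symmetry_assoc]

lemma transpose_comp (J : G) {X' X Y : G} (a : X' ⟶ X) (u : X ⟶ pObj J Y) :
    transpose J (a ≫ u) = transpose J u ≫ pMap J a := by
  -- the ascriptions keep the middle object `pObj`, not `ihom`, so that `rw` finds these terms
  have uncurry_comp_pMap : uncurry (transpose J u ≫ pMap J a : Y ⟶ pObj J X') =
      a ▷ Y ≫ uncurry (transpose J u) := uncurry_pre_app (f := transpose J u) (g := a)
  have uncurry_comp : uncurry (a ≫ u : X' ⟶ pObj J Y) = Y ◁ a ≫ uncurry u :=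
    uncurry_natural_left a u
  apply uncurry_injective
  rw [uncurry_comp_pMap, uncurry_transpose, uncurry_transpose, uncurry_comp,
    BraidedCategory.braiding_naturality_left_assoc]

lemma comp_transpose (J : G) {X Y' Y : G} (b : Y' ⟶ Y) (u : X ⟶ pObj J Y) :
    b ≫ transpose J u = transpose J (u ≫ pMap J b) := by
  rw [← transpose_transpose J (b ≫ _), transpose_comp, transpose_transpose]

lemma transpose_comp_pMap_of_comm (J : G) {X' X Y Y' : G} {a : X' ⟶ X} {b : Y ⟶ Y'}
    {u : X ⟶ pObj J Y} {u' : X' ⟶ pObj J Y'} (h : a ≫ u = u' ≫ pMap J b) :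
    b ≫ transpose J u' = transpose J u ≫ pMap J a := by
  rw [comp_transpose, ← h, transpose_comp]

end Transpose

section NatTransTranspose

variable {D : Type v} [SmallCategory D]

noncomputable def natTransTranspose (J : G) (P : D ⥤ G) (Q : Dᵒᵖ ⥤ G) :
    (P ⟶ opOp D ⋙ dObj J Q) ≃ (Q ⟶ dObj J P) where
  toFun u :=
    { app d := transpose J (u.app d.unop)
      naturality _ _ φ := transpose_comp_pMap_of_comm J (u.naturality φ.unop) }
  invFun v :=
    { app d := transpose J (v.app (Opposite.op d))
      naturality _ _ φ := transpose_comp_pMap_of_comm J (v.naturality φ.op) }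
  left_inv u := by ext; exact transpose_transpose J _
  right_inv v := by ext; exact transpose_transpose J _

lemma comp_natTransTranspose (J : G) {P : D ⥤ G} {Q' Q : Dᵒᵖ ⥤ G} (a : Q' ⟶ Q)
    (u : P ⟶ opOp D ⋙ dObj J Q) :
    a ≫ natTransTranspose J P Q u =
      natTransTranspose J P Q' (u ≫ Functor.whiskerLeft (opOp D) (dMap J a)) := by
  ext c
  exact comp_transpose J (a.app c) (u.app c.unop)

end NatTransTranspose

section Statement

variable {C : Type v} [SmallCategory C]
variable [HasLimits G] [HasColimits G] [AB5 G] [HasSeparator G]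

theorem statement1_general (J : G) (F : C ⥤ G) :
    IsPureInjective J (dObj J F) := by
  intro K E L i p w _ ⟨splitting⟩ f
  obtain ⟨s, hs⟩ : ∃ s : dObj J K ⟶ dObj J E, s ≫ dMap J i = 𝟙 _ :=
    ⟨splitting.s, splitting.s_g⟩
  let e := natTransTranspose J F
  refine ⟨e E ((e K).symm f ≫ Functor.whiskerLeft (opOp C) s), ?_⟩
  rw [comp_natTransTranspose, Category.assoc, ← Functor.whiskerLeft_comp, hs,
    Functor.whiskerLeft_id', Category.comp_id, Equiv.apply_symm_apply]

/-- For every functor `F` in `A = Fun(C, G)`, the functor `F⁺` in `B = Fun(Cᵒᵖ, G)` is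
pure injective. -/
theorem statement1 (J : G) [Injective J] (hJ : IsCoseparator J) (F : C ⥤ G) :
    IsPureInjective J (dObj J F) :=
  statement1_general J F

end Statement

end FlatFunctorsPaper
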